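/- (Bayes factor convergence, Theorem 2 of the paper.) Let P be the true distribution of the process {X_1, X_2, ...} with n-dimensional marginal density p_n. For i = 1,2, let model M_i have parameter space Theta_i, likelihood L_n(theta_i | M_i), prior density pi(theta_i | M_i) > 0 at some theta_i in Theta_i, posterior density pi(theta_i | X_n, M_i), and marginal m(X_n | M_i) = L_n(theta_i | M_i) pi(theta_i | M_i) / pi(theta_i | X_n, M_i). Suppose real constants h_i(theta_i) >= h_i(Theta_i) >= 0 are such that, P-almost surely, (1/n) log ( L_n(theta_i | M_i) / p_n ) converges to -h_i(theta_i) and (1/n) log pi(theta_i | X_n, M_i) converges to -( h_i(theta_i) - h_i(Theta_i) ) as n tends to infinity, for i=1,2. Then, P-almost surely, (1/n) log B_n^{(12)} converges to -( h_1(Theta_1) - h_2(Theta_2) ), where B_n^{(12)} = m(X_n | M_1) / m(X_n | M_2) is the Bayes factor. -/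

import Mathlib

open MeasureTheory Filter Topology

/-!
By the basic marginal likelihood identity, `log B_n` splits into the log-likelihood ratio
`log (L₁/p_n) - log (L₂/p_n)`, the constant log prior ratio and the log posterior ratio.
After division by `n` the prior term vanishes and the other two converge to
`-h₁ + h₂` and `(h₁ - hΘ₁) - (h₂ - hΘ₂)`, whose sum is `-(hΘ₁ - hΘ₂)`.
-/

lemma log_marginal_ratio_eq {p l₁ l₂ q₁ q₂ a b : ℝ} (hp : p ≠ 0) (hl₁ : l₁ ≠ 0) (hl₂ : l₂ ≠ 0)
    (hq₁ : q₁ ≠ 0) (hq₂ : q₂ ≠ 0) (ha : a ≠ 0) (hb : b ≠ 0) :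
    Real.log ((l₁ * a / q₁) / (l₂ * b / q₂)) =
      (Real.log (l₁ / p) - Real.log (l₂ / p)) + Real.log (a / b) +
        (Real.log q₂ - Real.log q₁) := by
  have hsplit : (l₁ * a / q₁) / (l₂ * b / q₂) = (l₁ / p) / (l₂ / p) * (a / b) * (q₂ / q₁) := by
    field_simp
  have hL₁ : l₁ / p ≠ 0 := div_ne_zero hl₁ hp
  have hL₂ : l₂ / p ≠ 0 := div_ne_zero hl₂ hp
  rw [hsplit, Real.log_mul (mul_ne_zero (div_ne_zero hL₁ hL₂) (div_ne_zero ha hb))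
    (div_ne_zero hq₂ hq₁), Real.log_mul (div_ne_zero hL₁ hL₂) (div_ne_zero ha hb),
    Real.log_div hL₁ hL₂, Real.log_div hq₂ hq₁]

lemma tendsto_inv_mul_log_marginal_ratio {p l₁ l₂ q₁ q₂ : ℕ → ℝ} {a b ℓ₁ ℓ₂ κ₁ κ₂ : ℝ}
    (ha : a ≠ 0) (hb : b ≠ 0)
    (hne : ∀ n, p n ≠ 0 ∧ l₁ n ≠ 0 ∧ l₂ n ≠ 0 ∧ q₁ n ≠ 0 ∧ q₂ n ≠ 0)
    (hl₁ : Tendsto (fun n : ℕ => (n : ℝ)⁻¹ * Real.log (l₁ n / p n)) atTop (𝓝 ℓ₁))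
    (hl₂ : Tendsto (fun n : ℕ => (n : ℝ)⁻¹ * Real.log (l₂ n / p n)) atTop (𝓝 ℓ₂))
    (hq₁ : Tendsto (fun n : ℕ => (n : ℝ)⁻¹ * Real.log (q₁ n)) atTop (𝓝 κ₁))
    (hq₂ : Tendsto (fun n : ℕ => (n : ℝ)⁻¹ * Real.log (q₂ n)) atTop (𝓝 κ₂)) :
    Tendsto (fun n : ℕ => (n : ℝ)⁻¹ * Real.log ((l₁ n * a / q₁ n) / (l₂ n * b / q₂ n)))
      atTop (𝓝 ((ℓ₁ - ℓ₂) + (κ₂ - κ₁))) := by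
  have hprior : Tendsto (fun n : ℕ => (n : ℝ)⁻¹ * Real.log (a / b)) atTop (𝓝 0) := by
    simpa using tendsto_inv_atTop_nhds_zero_nat.mul_const (Real.log (a / b))
  have hsum := ((hl₁.sub hl₂).add hprior).add (hq₂.sub hq₁)
  rw [add_zero] at hsum
  refine hsum.congr fun n => ?_
  obtain ⟨hp, hl₁, hl₂, hq₁, hq₂⟩ := hne n
  rw [log_marginal_ratio_eq hp hl₁ hl₂ hq₁ hq₂ ha hb]
  ring

theorem bayes_factor_convergence_general
    {Ω : Type*} [MeasurableSpace Ω] (P : Measure Ω)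
    (p L1 L2 post1 post2 : ℕ → Ω → ℝ)
    (pri1 pri2 : ℝ) (hpri1 : 0 < pri1) (hpri2 : 0 < pri2)
    (h1 h2 hΘ1 hΘ2 : ℝ)
    (hpos : ∀ᵐ ω ∂P, ∀ n : ℕ, 0 < p n ω ∧ 0 < L1 n ω ∧ 0 < L2 n ω ∧
      0 < post1 n ω ∧ 0 < post2 n ω)
    (hlik1 : ∀ᵐ ω ∂P, Tendsto (fun n : ℕ => (n : ℝ)⁻¹ * Real.log (L1 n ω / p n ω))
      atTop (nhds (-h1)))
    (hlik2 : ∀ᵐ ω ∂P, Tendsto (fun n : ℕ => (n : ℝ)⁻¹ * Real.log (L2 n ω / p n ω))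
      atTop (nhds (-h2)))
    (hpost1 : ∀ᵐ ω ∂P, Tendsto (fun n : ℕ => (n : ℝ)⁻¹ * Real.log (post1 n ω))
      atTop (nhds (-(h1 - hΘ1))))
    (hpost2 : ∀ᵐ ω ∂P, Tendsto (fun n : ℕ => (n : ℝ)⁻¹ * Real.log (post2 n ω))
      atTop (nhds (-(h2 - hΘ2)))) :
    ∀ᵐ ω ∂P, Tendsto (fun n : ℕ =>
        (n : ℝ)⁻¹ * Real.log ((L1 n ω * pri1 / post1 n ω) / (L2 n ω * pri2 / post2 n ω)))
      atTop (nhds (-(hΘ1 - hΘ2))) := by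
  filter_upwards [hpos, hlik1, hlik2, hpost1, hpost2] with ω hω hl1 hl2 hq1 hq2
  have hne : ∀ n, p n ω ≠ 0 ∧ L1 n ω ≠ 0 ∧ L2 n ω ≠ 0 ∧ post1 n ω ≠ 0 ∧ post2 n ω ≠ 0 :=
    fun n => by
      obtain ⟨hp, hL1, hL2, hq1, hq2⟩ := hω n
      exact ⟨hp.ne', hL1.ne', hL2.ne', hq1.ne', hq2.ne'⟩
  convert tendsto_inv_mul_log_marginal_ratio hpri1.ne' hpri2.ne' hne hl1 hl2 hq1 hq2 using 2
  ring

/-- **Bayes factor convergence; Theorem 2 of the paper.**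
`P` is the true distribution, `p n ω` the true joint density of the first `n` observations.
For `i = 1,2`, model `Mᵢ` has likelihood `Lᵢ n ω` at a fixed `θᵢ`, prior density value
`priᵢ > 0` at `θᵢ`, posterior density `postᵢ n ω` at `θᵢ`, and marginal
`m(X_n | Mᵢ) = Lᵢ n ω * priᵢ / postᵢ n ω`.  Assume constants `hᵢ ≥ hΘᵢ ≥ 0` such that,
`P`-a.s., `(1/n) log (Lᵢ n / p n) → -hᵢ` and `(1/n) log (postᵢ n) → -(hᵢ - hΘᵢ)`.
Then, `P`-a.s., `(1/n) log B_n^{(12)} → -(hΘ₁ - hΘ₂)` where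
`B_n^{(12)} = m(X_n | M₁) / m(X_n | M₂)`. -/
theorem bayes_factor_convergence
    {Ω : Type*} [MeasurableSpace Ω] (P : Measure Ω) [IsProbabilityMeasure P]
    (p L1 L2 post1 post2 : ℕ → Ω → ℝ)
    (pri1 pri2 : ℝ) (hpri1 : 0 < pri1) (hpri2 : 0 < pri2)
    (h1 h2 hΘ1 hΘ2 : ℝ)
    (hΘ1nonneg : 0 ≤ hΘ1) (hΘ2nonneg : 0 ≤ hΘ2)
    (hh1 : hΘ1 ≤ h1) (hh2 : hΘ2 ≤ h2)
    (hpos : ∀ᵐ ω ∂P, ∀ n : ℕ, 0 < p n ω ∧ 0 < L1 n ω ∧ 0 < L2 n ω ∧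
      0 < post1 n ω ∧ 0 < post2 n ω)
    (hlik1 : ∀ᵐ ω ∂P, Tendsto (fun n : ℕ => (n : ℝ)⁻¹ * Real.log (L1 n ω / p n ω))
      atTop (nhds (-h1)))
    (hlik2 : ∀ᵐ ω ∂P, Tendsto (fun n : ℕ => (n : ℝ)⁻¹ * Real.log (L2 n ω / p n ω))
      atTop (nhds (-h2)))
    (hpost1 : ∀ᵐ ω ∂P, Tendsto (fun n : ℕ => (n : ℝ)⁻¹ * Real.log (post1 n ω))
      atTop (nhds (-(h1 - hΘ1))))
    (hpost2 : ∀ᵐ ω ∂P, Tendsto (fun n : ℕ => (n : ℝ)⁻¹ * Real.log (post2 n ω))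
      atTop (nhds (-(h2 - hΘ2)))) :
    ∀ᵐ ω ∂P, Tendsto (fun n : ℕ =>
        (n : ℝ)⁻¹ * Real.log ((L1 n ω * pri1 / post1 n ω) / (L2 n ω * pri2 / post2 n ω)))
      atTop (nhds (-(hΘ1 - hΘ2))) :=
  bayes_factor_convergence_general P p L1 L2 post1 post2 pri1 pri2 hpri1 hpri2 h1 h2 hΘ1 hΘ2 hpos
    hlik1 hlik2 hpost1 hpost2
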